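/- arXiv:2109.00713 — 3 statements merged into one kernel-verified Lean document; each statement's English description precedes it below -/
import Mathlib

section
/- For an irreducible generator Q with stationary distribution π, the fundamental matrix Q⁻ := (1π − Q)⁻¹ exists and equals D♯ + 1π, where D♯ is the deviation matrix. -/
open Matrix MeasureTheory

/-- `Q` is a generator matrix of a finite CTMC: nonnegative off-diagonal entries
and zero row sums. -/
def IsGenerator {n : Type*} [Fintype n] (Q : Matrix n n ℝ) : Prop :=
  (∀ i j, i ≠ j → 0 ≤ Q i j) ∧ ∀ i, ∑ j, Q i j = 0

/-- Irreducibility of the CTMC with generator `Q`: the transition matrix `e^Q`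
is entrywise positive. -/
def IsIrreducibleGen {n : Type*} [Fintype n] [DecidableEq n] (Q : Matrix n n ℝ) : Prop :=
  ∀ i j, 0 < NormedSpace.exp Q i j

/-- `π` is a stationary distribution of the generator `Q`: `πQ = 0`, `π1 = 1`. -/
def IsStationaryDist {n : Type*} [Fintype n] (Q : Matrix n n ℝ) (π : n → ℝ) : Prop :=
  (∀ i, 0 ≤ π i) ∧ (∑ i, π i = 1) ∧ π ᵥ* Q = 0

/-- The rank-one matrix `1π`. -/
def onePi {n : Type*} (π : n → ℝ) : Matrix n n ℝ :=
  Matrix.of fun _ j => π j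

/-- `Ds` is the deviation matrix `D♯ = ∫₀^∞ (e^{Qu} − 1π) du` of `Q`
(entrywise convergent integral). -/
def IsDeviation {n : Type*} [Fintype n] [DecidableEq n] (Q : Matrix n n ℝ) (π : n → ℝ)
    (Ds : Matrix n n ℝ) : Prop :=
  ∀ i j, IntegrableOn (fun u => NormedSpace.exp (u • Q) i j - π j) (Set.Ioi (0:ℝ)) MeasureTheory.volume ∧
    Ds i j = ∫ u in Set.Ioi (0:ℝ), (NormedSpace.exp (u • Q) i j - π j)

/-- `Dt` is the transient deviation matrix `D♯(t) = ∫₀^t (e^{Qu} − 1π) du` of `Q`. -/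
def IsTransientDeviation {n : Type*} [Fintype n] [DecidableEq n] (Q : Matrix n n ℝ) (π : n → ℝ)
    (Dt : ℝ → Matrix n n ℝ) : Prop :=
  ∀ t i j, Dt t i j = ∫ u in Set.Ioc (0:ℝ) t, (NormedSpace.exp (u • Q) i j - π j)

/-!
Write `P = 1π` and `G u = e^{uQ} - P`. Zero row sums and `πQ = 0` give `QP = PQ = 0`, and `π1 = 1`
gives `P² = P`; hence `Q` commutes with `G u`, `G' = Q G` and `P G u = G u P = 0`. Integrating over
`(0, ∞)`, where integrability of `G` forces `G u → 0`, yields `Q D♯ = D♯ Q = -G 0 = P - 1` and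
`P D♯ = D♯ P = 0`, so `(P - Q)(D♯ + P) = P - Q D♯ = 1`, and symmetrically.
-/

open NormedSpace Set

theorem integral_Ioi_of_hasDerivAt_of_integrableOn {E : Type*} [NormedAddCommGroup E]
    [NormedSpace ℝ E] [CompleteSpace E] {f f' : ℝ → E} {a : ℝ}
    (hderiv : ∀ x ∈ Ici a, HasDerivAt f (f' x) x) (hf' : IntegrableOn f' (Ioi a))
    (hf : IntegrableOn f (Ioi a)) : ∫ x in Ioi a, f' x = -f a := by
  have hlim := tendsto_zero_of_hasDerivAt_of_integrableOn_Ioi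
    (fun x hx => hderiv x (mem_Ici_of_Ioi hx)) hf' hf
  rw [integral_Ioi_of_hasDerivAt_of_tendsto' hderiv hf' hlim, zero_sub]

-- Matrices carry no canonical norm, so integrals of matrix-valued functions are taken entrywise.
def IsEntrywiseIntegral {n α : Type*} [MeasurableSpace α] (D : Matrix n n ℝ)
    (G : α → Matrix n n ℝ) (μ : Measure α) : Prop :=
  ∀ i j, Integrable (fun u => G u i j) μ ∧ D i j = ∫ u, G u i j ∂μ

namespace IsEntrywiseIntegral

variable {n α : Type*} [Fintype n] [MeasurableSpace α] {μ : Measure α}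
  {G : α → Matrix n n ℝ} {D : Matrix n n ℝ}

theorem integrable_mul_apply (hD : IsEntrywiseIntegral D G μ) (A : Matrix n n ℝ) (i j : n) :
    Integrable (fun u => (A * G u) i j) μ := by
  simp only [mul_apply]
  exact integrable_finsetSum _ fun k _ => (hD k j).1.const_mul _

theorem mul_apply_eq_integral (hD : IsEntrywiseIntegral D G μ) (A : Matrix n n ℝ) (i j : n) :
    (A * D) i j = ∫ u, (A * G u) i j ∂μ := by
  simp only [mul_apply, fun k => (hD k j).2, ← integral_const_mul]
  exact (integral_finsetSum _ fun k _ => (hD k j).1.const_mul _).symm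

theorem mul_apply_eq_integral' (hD : IsEntrywiseIntegral D G μ) (A : Matrix n n ℝ) (i j : n) :
    (D * A) i j = ∫ u, (G u * A) i j ∂μ := by
  simp only [mul_apply, fun k => (hD i k).2, ← integral_mul_const]
  exact (integral_finsetSum _ fun k _ => (hD i k).1.mul_const _).symm

theorem mul_eq_zero_of_forall (hD : IsEntrywiseIntegral D G μ) {A : Matrix n n ℝ}
    (h : ∀ u, A * G u = 0) : A * D = 0 := by
  ext i j
  simp [hD.mul_apply_eq_integral, h]

theorem mul_eq_zero_of_forall' (hD : IsEntrywiseIntegral D G μ) {A : Matrix n n ℝ}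
    (h : ∀ u, G u * A = 0) : D * A = 0 := by
  ext i j
  simp [hD.mul_apply_eq_integral', h]

theorem commute_of_forall (hD : IsEntrywiseIntegral D G μ) {A : Matrix n n ℝ}
    (h : ∀ u, Commute A (G u)) : Commute A D := by
  ext i j
  simp [hD.mul_apply_eq_integral, hD.mul_apply_eq_integral', (h _).eq]

theorem mul_eq_neg_of_hasDerivAt {G : ℝ → Matrix n n ℝ} {a : ℝ}
    (hD : IsEntrywiseIntegral D G (volume.restrict (Ioi a))) {A : Matrix n n ℝ}
    (hderiv : ∀ u ∈ Ici a, ∀ i j, HasDerivAt (fun u => G u i j) ((A * G u) i j) u) :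
    A * D = -G a := by
  ext i j
  rw [hD.mul_apply_eq_integral]
  exact integral_Ioi_of_hasDerivAt_of_integrableOn (fun u hu => hderiv u hu i j)
    (hD.integrable_mul_apply A i j) (hD i j).1

end IsEntrywiseIntegral

section MatrixExp

attribute [local instance] Matrix.linftyOpNormedRing Matrix.linftyOpNormedAlgebra

variable {n : Type*} [Fintype n] [DecidableEq n] {Q M : Matrix n n ℝ}

theorem exp_smul_mul_of_mul_eq_zero (h : Q * M = 0) (u : ℝ) : exp (u • Q) * M = M := by
  have hderiv (v : ℝ) := (hasDerivAt_exp_smul_const (𝕂 := ℝ) Q v).mul_const M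
  simp only [mul_assoc, h, mul_zero] at hderiv
  have := is_const_of_deriv_eq_zero (fun v => (hderiv v).differentiableAt)
    (fun v => (hderiv v).deriv) u 0
  simp only [zero_smul, exp_zero, one_mul] at this
  exact this

theorem mul_exp_smul_of_mul_eq_zero (h : M * Q = 0) (u : ℝ) : M * exp (u • Q) = M := by
  have hderiv (v : ℝ) := (hasDerivAt_exp_smul_const' (𝕂 := ℝ) Q v).const_mul M
  simp only [← mul_assoc, h, zero_mul] at hderiv
  have := is_const_of_deriv_eq_zero (fun v => (hderiv v).differentiableAt)
    (fun v => (hderiv v).deriv) u 0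
  simp only [zero_smul, exp_zero, mul_one] at this
  exact this

theorem hasDerivAt_exp_smul_sub_apply (h : Q * M = 0) (u : ℝ) (i j : n) :
    HasDerivAt (fun u : ℝ => (exp (u • Q) - M) i j) ((Q * (exp (u • Q) - M)) i j) u := by
  rw [mul_sub, h, sub_zero]
  exact (entryLinearMap ℝ ℝ i j).toContinuousLinearMap.hasFDerivAt.comp_hasDerivAt u
    ((hasDerivAt_exp_smul_const' Q u).sub_const M)

theorem commute_exp_smul_sub (h : Q * M = 0) (h' : M * Q = 0) (u : ℝ) :
    Commute Q (exp (u • Q) - M) := by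
  have hexp : Commute Q (exp (u • Q)) := ((Commute.refl Q).smul_right u).exp_right
  simp only [Commute, SemiconjBy, mul_sub, sub_mul, h, h', hexp.eq]

end MatrixExp

section Stationary

variable {n : Type*} [Fintype n] {Q : Matrix n n ℝ} {π : n → ℝ}

theorem mul_onePi_eq_zero (h : ∀ i, ∑ j, Q i j = 0) : Q * onePi π = 0 := by
  ext i j
  simp [onePi, mul_apply, ← Finset.sum_mul, h]

theorem onePi_mul_eq_zero (h : π ᵥ* Q = 0) : onePi π * Q = 0 := by
  ext i j
  simpa [onePi, mul_apply, vecMul, dotProduct] using congrFun h j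

theorem onePi_mul_onePi (h : ∑ i, π i = 1) : onePi π * onePi π = onePi π := by
  ext i j
  simp [onePi, mul_apply, ← Finset.sum_mul, h]

end Stationary

theorem stmt3_general {p : ℕ} (Q : Matrix (Fin p) (Fin p) ℝ) (π : Fin p → ℝ)
    (Ds : Matrix (Fin p) (Fin p) ℝ)
    (hQ : IsGenerator Q) (hπ : IsStationaryDist Q π)
    (hDs : IsDeviation Q π Ds) :
    (onePi π - Q) * (Ds + onePi π) = 1 ∧ (Ds + onePi π) * (onePi π - Q) = 1 := by
  obtain ⟨-, hrow⟩ := hQ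
  obtain ⟨-, hπ1, hπQ⟩ := hπ
  have hD : IsEntrywiseIntegral Ds (fun u : ℝ => exp (u • Q) - onePi π)
      (volume.restrict (Ioi 0)) := hDs
  set P := onePi π
  have hQP : Q * P = 0 := mul_onePi_eq_zero hrow
  have hPQ : P * Q = 0 := onePi_mul_eq_zero hπQ
  have hPP : P * P = P := onePi_mul_onePi hπ1
  have hQD : Q * Ds = P - 1 := by
    simpa using hD.mul_eq_neg_of_hasDerivAt fun u _ => hasDerivAt_exp_smul_sub_apply hQP u
  have hDQ : Ds * Q = P - 1 := (hD.commute_of_forall (commute_exp_smul_sub hQP hPQ)).eq ▸ hQD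
  have hPD : P * Ds = 0 := hD.mul_eq_zero_of_forall fun u => by
    rw [mul_sub, mul_exp_smul_of_mul_eq_zero hPQ, hPP, sub_self]
  have hDP : Ds * P = 0 := hD.mul_eq_zero_of_forall' fun u => by
    rw [sub_mul, exp_smul_mul_of_mul_eq_zero hQP, hPP, sub_self]
  constructor
  · rw [sub_mul, mul_add, mul_add, hPD, hPP, hQD, hQP]
    abel
  · rw [add_mul, mul_sub, mul_sub, hDP, hDQ, hPP, hPQ]
    abel

theorem stmt3 {p : ℕ} (Q : Matrix (Fin p) (Fin p) ℝ) (π : Fin p → ℝ)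
    (Ds : Matrix (Fin p) (Fin p) ℝ)
    (hQ : IsGenerator Q) (hirr : IsIrreducibleGen Q) (hπ : IsStationaryDist Q π)
    (hDs : IsDeviation Q π Ds) :
    (onePi π - Q) * (Ds + onePi π) = 1 ∧ (Ds + onePi π) * (onePi π - Q) = 1 :=
  stmt3_general Q π Ds hQ hπ hDs
end

section
/- Let G be a p×p irreducible generator matrix with entries q_{ij} (i≠j) and row sums zero, let λ ∈ ℝ^p with λ_i > S_i := Σ_{j≠i} q_{ij}. Define the 2p×2p matrices Q̄ (block matrix with diagonal 2×2 blocks Λ̄_i = [[−λ_i, λ_i − S_i],[λ_i − S_i, −λ_i]] and off-diagonal blocks H_{ij} = q_{ij} I₂) and Q̃ (diagonal blocks Λ̃_i = [[−(λ_i + S_i), λ_i],[λ_i, −(λ_i + S_i)]], same off-diagonal blocks). Then for all integers k ≥ 0: (I_p ⊗ 1₂ᵀ) Q̃^k = (I_p ⊗ 1₂ᵀ) Q̄^k = G^k (I_p ⊗ 1₂ᵀ), and Q̃^k (I_p ⊗ 1₂) = Q̄^k (I_p ⊗ 1₂) = (I_p ⊗ 1₂) G^k. -/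
open Matrix MeasureTheory

/-- `π` is a stationary distribution of the generator `Q`: `πQ = 0`, `π1 = 1`. -/
def IsStationaryGen {n : Type*} [Fintype n] (Q : Matrix n n ℝ) (π : n → ℝ) : Prop :=
  (∀ i, 0 ≤ π i) ∧ (∑ i, π i = 1) ∧ π ᵥ* Q = 0

/-- The `p × 2p` matrix `I_p ⊗ 1₂ᵀ`, where the `2p` index set is `Fin p × Fin 2`. -/
def kronA (p : ℕ) : Matrix (Fin p) (Fin p × Fin 2) ℝ :=
  Matrix.of fun i jk => if jk.1 = i then 1 else 0

/-- The slowness condition `λ_i > S_i = ∑_{j≠i} q_{ij} = -G i i` for a generator `G`. -/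
def IsSlow {p : ℕ} (G : Matrix (Fin p) (Fin p) ℝ) (lam : Fin p → ℝ) : Prop :=
  ∀ i, -G i i < lam i

/-- The `2p × 2p` generator `Q̄` of the MTCP associated with a slow MMPP with
modulating generator `G` and rates `λ`: diagonal `2×2` blocks
`[[−λ_i, λ_i − S_i],[λ_i − S_i, −λ_i]]` (note `λ_i − S_i = λ_i + G i i`) and
off-diagonal blocks `q_{ij} I₂`. -/
def Qbar {p : ℕ} (G : Matrix (Fin p) (Fin p) ℝ) (lam : Fin p → ℝ) :
    Matrix (Fin p × Fin 2) (Fin p × Fin 2) ℝ :=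
  Matrix.of fun ik jl =>
    if ik.1 = jl.1 then (if ik.2 = jl.2 then -lam ik.1 else lam ik.1 + G ik.1 ik.1)
    else (if ik.2 = jl.2 then G ik.1 jl.1 else 0)

/-- The `2p × 2p` generator `Q̃` of the coupled MAP built from the MMPP: diagonal
blocks `[[−(λ_i + S_i), λ_i],[λ_i, −(λ_i + S_i)]]` (note `−(λ_i+S_i) = G i i − λ_i`)
and off-diagonal blocks `q_{ij} I₂`. -/
def Qtil {p : ℕ} (G : Matrix (Fin p) (Fin p) ℝ) (lam : Fin p → ℝ) :
    Matrix (Fin p × Fin 2) (Fin p × Fin 2) ℝ :=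
  Matrix.of fun ik jl =>
    if ik.1 = jl.1 then (if ik.2 = jl.2 then G ik.1 ik.1 - lam ik.1 else lam ik.1)
    else (if ik.2 = jl.2 then G ik.1 jl.1 else 0)

/-- The event-intensity matrix `D̄ = Q̄ − diag(Q̄)` of the associated MTCP. -/
def Dbar {p : ℕ} (G : Matrix (Fin p) (Fin p) ℝ) (lam : Fin p → ℝ) :
    Matrix (Fin p × Fin 2) (Fin p × Fin 2) ℝ :=
  Qbar G lam - Matrix.diagonal fun ik => Qbar G lam ik ik

/-- The event-intensity matrix `D̃` of the coupled MMPP: block diagonal with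
blocks `[[0, λ_i],[λ_i, 0]]`. -/
def Dtil {p : ℕ} (lam : Fin p → ℝ) : Matrix (Fin p × Fin 2) (Fin p × Fin 2) ℝ :=
  Matrix.of fun ik jl => if ik.1 = jl.1 ∧ ik.2 ≠ jl.2 then lam ik.1 else 0

/-- The common stationary distribution `π = (1/2) ϑ (I_p ⊗ 1₂ᵀ)` of `Q̄` and `Q̃`. -/
noncomputable def piHat {p : ℕ} (θ : Fin p → ℝ) : Fin p × Fin 2 → ℝ :=
  (1/2 : ℝ) • (θ ᵥ* kronA p)


/-!
Every `2 × 2` block `(i, j)` of `Q̄` and of `Q̃` has all its row and column sums equal to `q_ij`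
(on the diagonal, `-λ_i + (λ_i - S_i) = -(λ_i + S_i) + λ_i = -S_i`). This is exactly the
intertwining `A Q = G A` and `Q Aᵀ = Aᵀ G` for `A = I_p ⊗ 1₂ᵀ`, which passes to powers.
-/

section Lumping

variable {p : ℕ}

@[simp]
lemma kronA_mul_apply {ι : Type*} (Q : Matrix (Fin p × Fin 2) ι ℝ) (i : Fin p) (x : ι) :
    (kronA p * Q) i x = ∑ k, Q (i, k) x := by
  simp [Matrix.mul_apply, kronA, Fintype.sum_prod_type, Finset.sum_add_distrib]

@[simp]
lemma mul_kronA_apply (G : Matrix (Fin p) (Fin p) ℝ) (i : Fin p) (jl : Fin p × Fin 2) :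
    (G * kronA p) i jl = G i jl.1 := by
  simp [Matrix.mul_apply, kronA]

@[simp]
lemma mul_kronA_transpose_apply {ι : Type*} (Q : Matrix ι (Fin p × Fin 2) ℝ) (x : ι)
    (j : Fin p) : (Q * (kronA p)ᵀ) x j = ∑ l, Q x (j, l) := by
  simp [Matrix.mul_apply, kronA, Fintype.sum_prod_type, Finset.sum_add_distrib]

@[simp]
lemma kronA_transpose_mul_apply (G : Matrix (Fin p) (Fin p) ℝ) (ik : Fin p × Fin 2)
    (j : Fin p) : ((kronA p)ᵀ * G) ik j = G ik.1 j := by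
  simp [Matrix.mul_apply, kronA]

lemma kronA_mul_eq_mul_kronA_iff (Q : Matrix (Fin p × Fin 2) (Fin p × Fin 2) ℝ)
    (G : Matrix (Fin p) (Fin p) ℝ) :
    kronA p * Q = G * kronA p ↔ ∀ i j l, ∑ k, Q (i, k) (j, l) = G i j := by
  simp only [← Matrix.ext_iff, Prod.forall, kronA_mul_apply, mul_kronA_apply]

lemma mul_kronA_transpose_eq_iff (Q : Matrix (Fin p × Fin 2) (Fin p × Fin 2) ℝ)
    (G : Matrix (Fin p) (Fin p) ℝ) :
    Q * (kronA p)ᵀ = (kronA p)ᵀ * G ↔ ∀ i j k, ∑ l, Q (i, k) (j, l) = G i j := by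
  simp only [← Matrix.ext_iff, Prod.forall, mul_kronA_transpose_apply, kronA_transpose_mul_apply]
  exact forall_congr' fun _ => forall_comm

end Lumping

lemma Matrix.mul_pow_eq_pow_mul_of_mul_eq {m n R : Type*} [Fintype m] [DecidableEq m]
    [Fintype n] [DecidableEq n] [Semiring R] {A : Matrix m n R} {Q : Matrix n n R}
    {G : Matrix m m R} (h : A * Q = G * A) (k : ℕ) : A * Q ^ k = G ^ k * A := by
  induction k with
  | zero => simp
  | succ k ih => rw [pow_succ, pow_succ, ← Matrix.mul_assoc, ih, Matrix.mul_assoc, h,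
      Matrix.mul_assoc]

lemma Matrix.pow_mul_eq_mul_pow_of_mul_eq {m n R : Type*} [Fintype m] [DecidableEq m]
    [Fintype n] [DecidableEq n] [Semiring R] {B : Matrix n m R} {Q : Matrix n n R}
    {G : Matrix m m R} (h : Q * B = B * G) (k : ℕ) : Q ^ k * B = B * G ^ k := by
  induction k with
  | zero => simp
  | succ k ih => rw [pow_succ, Matrix.mul_assoc, h, ← Matrix.mul_assoc, ih,
      Matrix.mul_assoc, ← pow_succ]

section BlockSums

variable {p : ℕ} (G : Matrix (Fin p) (Fin p) ℝ) (lam : Fin p → ℝ) (i j : Fin p) (l : Fin 2)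

lemma Qbar_sum_fst : ∑ k, Qbar G lam (i, k) (j, l) = G i j := by
  by_cases h : i = j <;> fin_cases l <;> simp [Qbar, Fin.sum_univ_two, h]

lemma Qbar_sum_snd : ∑ k, Qbar G lam (i, l) (j, k) = G i j := by
  by_cases h : i = j <;> fin_cases l <;> simp [Qbar, Fin.sum_univ_two, h]

lemma Qtil_sum_fst : ∑ k, Qtil G lam (i, k) (j, l) = G i j := by
  by_cases h : i = j <;> fin_cases l <;> simp [Qtil, Fin.sum_univ_two, h]

lemma Qtil_sum_snd : ∑ k, Qtil G lam (i, l) (j, k) = G i j := by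
  by_cases h : i = j <;> fin_cases l <;> simp [Qtil, Fin.sum_univ_two, h]

end BlockSums

theorem stmt5_general {p : ℕ} (G : Matrix (Fin p) (Fin p) ℝ) (lam : Fin p → ℝ) :
    ∀ k : ℕ,
      kronA p * (Qtil G lam) ^ k = G ^ k * kronA p ∧
      kronA p * (Qbar G lam) ^ k = G ^ k * kronA p ∧
      (Qtil G lam) ^ k * (kronA p)ᵀ = (kronA p)ᵀ * G ^ k ∧
      (Qbar G lam) ^ k * (kronA p)ᵀ = (kronA p)ᵀ * G ^ k := fun k =>
  ⟨mul_pow_eq_pow_mul_of_mul_eq ((kronA_mul_eq_mul_kronA_iff _ _).2 (Qtil_sum_fst G lam)) k,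
   mul_pow_eq_pow_mul_of_mul_eq ((kronA_mul_eq_mul_kronA_iff _ _).2 (Qbar_sum_fst G lam)) k,
   pow_mul_eq_mul_pow_of_mul_eq ((mul_kronA_transpose_eq_iff _ _).2 (Qtil_sum_snd G lam)) k,
   pow_mul_eq_mul_pow_of_mul_eq ((mul_kronA_transpose_eq_iff _ _).2 (Qbar_sum_snd G lam)) k⟩

theorem stmt5 {p : ℕ} (G : Matrix (Fin p) (Fin p) ℝ) (lam : Fin p → ℝ)
    (hG : IsGenerator G) (hirr : IsIrreducibleGen G) (hslow : IsSlow G lam) :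
    ∀ k : ℕ,
      kronA p * (Qtil G lam) ^ k = G ^ k * kronA p ∧
      kronA p * (Qbar G lam) ^ k = G ^ k * kronA p ∧
      (Qtil G lam) ^ k * (kronA p)ᵀ = (kronA p)ᵀ * G ^ k ∧
      (Qbar G lam) ^ k * (kronA p)ᵀ = (kronA p)ᵀ * G ^ k :=
  stmt5_general G lam
end

section
/- Let Q̄, Q̃, D̄, D̃, π be as in the slow-MMPP/MTCP construction. Then the time-stationary mean counts agree for all t ≥ 0: π D̃ 1_{2p} · t = π D̄ 1_{2p} · t, and the time-stationary variances agree: π D̄ 1 t + 2πD̄ D♯_{Q̄} D̄ 1 t − 2πD̄ D♯_{Q̄} D♯_{Q̄}(t) D̄ 1 = π D̃ 1 t + 2πD̃ D♯_{Q̃} D̃ 1 t − 2πD̃ D♯_{Q̃} D♯_{Q̃}(t) D̃ 1 for all t ≥ 0. -/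
open Matrix MeasureTheory

/-!
Both `Q̄` and `Q̃` are lumpable onto `G` along the pairs of phases `{(i,0), (i,1)}`: with the
lifting matrix `L = I_p ⊗ 1₂ = (kronA p)ᵀ` one has `Q L = L G`, hence `e^{uQ} L = L e^{uG}`.
Integrating `e^{uQ} - 1π` against `L` therefore gives deviation matrices with `D♯_{Q̄} L = D♯_{Q̃} L`
and transient deviation matrices with `D♯_Q(t) L = L D♯_G(t)` for both chains. Since
`D̄ 1 = D̃ 1 = L λ` and `π D̄ = π D̃`, both variance formulas only evaluate `D♯` and `D♯(t)` on the
range of `L`, where the two chains agree.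
-/

open NormedSpace

section Lumpability

open scoped Matrix.Norms.Operator

variable {n m : Type*} [Fintype n] [Fintype m] [DecidableEq n] [DecidableEq m]

theorem exp_mul_eq_mul_exp_of_mul_eq {A : Matrix n n ℝ} {B : Matrix m m ℝ} {L : Matrix n m ℝ}
    (h : A * L = L * B) : exp A * L = L * exp B := by
  have hpow (k : ℕ) : A ^ k * L = L * B ^ k := by
    induction k with
    | zero => simp
    | succ k ih =>
      rw [pow_succ, pow_succ, Matrix.mul_assoc, h, ← Matrix.mul_assoc, ih, Matrix.mul_assoc]
  have hA := (exp_series_hasSum_exp' (𝕂 := ℝ) A).map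
    (AddMonoidHom.mk' (· * L) fun X Y => Matrix.add_mul X Y L)
    (continuous_id.matrix_mul continuous_const)
  have hB := (exp_series_hasSum_exp' (𝕂 := ℝ) B).map
    (AddMonoidHom.mk' (L * ·) fun X Y => Matrix.mul_add L X Y)
    (continuous_const.matrix_mul continuous_id)
  refine hA.unique (hB.congr_fun fun k => ?_)
  simp [Matrix.smul_mul, Matrix.mul_smul, hpow]

theorem integrableOn_Ioc_exp_smul_apply_sub (Q : Matrix n n ℝ) (π : n → ℝ) (x y : n) (a b : ℝ) :
    IntegrableOn (fun u => exp (u • Q) x y - π y) (Set.Ioc a b) :=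
  (((continuous_apply_apply x y).comp (differentiable_exp_smul_const ℝ Q).continuous).sub
    continuous_const).integrableOn_Ioc

theorem exp_smul_mul_eq_mul_exp_smul {Q : Matrix n n ℝ} {G : Matrix m m ℝ} {L : Matrix n m ℝ}
    (hQ : Q * L = L * G) (u : ℝ) : exp (u • Q) * L = L * exp (u • G) :=
  exp_mul_eq_mul_exp_of_mul_eq (by rw [Matrix.smul_mul, hQ, Matrix.mul_smul])

theorem mul_apply_eq_setIntegral_of_mul_eq {Q : Matrix n n ℝ} {G : Matrix m m ℝ}
    {L : Matrix n m ℝ} (hQ : Q * L = L * G) (π : n → ℝ) {s : Set ℝ} {M : Matrix n n ℝ}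
    (hint : ∀ x y, IntegrableOn (fun u => exp (u • Q) x y - π y) s)
    (hM : ∀ x y, M x y = ∫ u in s, (exp (u • Q) x y - π y)) (x : n) (j : m) :
    (M * L) x j = ∫ u in s, ((L * exp (u • G)) x j - (π ᵥ* L) j) := by
  have hsum (u : ℝ) : ∑ y, (exp (u • Q) x y - π y) * L y j
      = (L * exp (u • G)) x j - (π ᵥ* L) j := by
    rw [← exp_smul_mul_eq_mul_exp_smul hQ, mul_apply, vecMul, dotProduct]
    simp only [sub_mul, Finset.sum_sub_distrib]
  rw [mul_apply]
  simp_rw [hM, ← integral_mul_const]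
  rw [← integral_finsetSum _ fun y _ => (hint x y).mul_const _]
  simp_rw [hsum]

theorem IsDeviation.mul_eq_mul_of_mul_eq {Q₁ Q₂ : Matrix n n ℝ} {G : Matrix m m ℝ}
    {L : Matrix n m ℝ} {π : n → ℝ} {D₁ D₂ : Matrix n n ℝ}
    (h₁ : IsDeviation Q₁ π D₁) (h₂ : IsDeviation Q₂ π D₂)
    (hQ₁ : Q₁ * L = L * G) (hQ₂ : Q₂ * L = L * G) : D₁ * L = D₂ * L := by
  ext x j
  rw [mul_apply_eq_setIntegral_of_mul_eq hQ₁ π (fun x y => (h₁ x y).1) (fun x y => (h₁ x y).2),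
    mul_apply_eq_setIntegral_of_mul_eq hQ₂ π (fun x y => (h₂ x y).1) (fun x y => (h₂ x y).2)]

theorem IsTransientDeviation.mul_eq_mul_of_mul_eq {Q : Matrix n n ℝ} {G : Matrix m m ℝ}
    {L : Matrix n m ℝ} {π : n → ℝ} {D : ℝ → Matrix n n ℝ} {DG : ℝ → Matrix m m ℝ}
    (hD : IsTransientDeviation Q π D) (hDG : IsTransientDeviation G (π ᵥ* L) DG)
    (hQ : Q * L = L * G) (hL : L *ᵥ 1 = 1) (t : ℝ) : D t * L = L * DG t := by
  ext x j
  have hrow : ∑ i, L x i = 1 := by simpa [mulVec, dotProduct] using congrFun hL x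
  rw [mul_apply_eq_setIntegral_of_mul_eq hQ π
    (fun x y => integrableOn_Ioc_exp_smul_apply_sub Q π x y 0 t) (hD t), mul_apply]
  simp_rw [hDG t, ← integral_const_mul]
  rw [← integral_finsetSum _ fun i _ =>
    (integrableOn_Ioc_exp_smul_apply_sub G _ i j 0 t).const_mul _]
  simp_rw [mul_sub, Finset.sum_sub_distrib, ← Finset.sum_mul, hrow, one_mul, mul_apply]

end Lumpability

section Construction

variable {p : ℕ}

theorem kronA_transpose_mulVec (f : Fin p → ℝ) : (kronA p)ᵀ *ᵥ f = fun ik => f ik.1 := by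
  ext ik
  simp [kronA, mulVec, dotProduct]

theorem kronA_transpose_mulVec_one : (kronA p)ᵀ *ᵥ 1 = 1 :=
  kronA_transpose_mulVec 1

theorem piHat_apply (θ : Fin p → ℝ) (ik : Fin p × Fin 2) : piHat θ ik = θ ik.1 / 2 := by
  simp [piHat, vecMul, dotProduct, kronA]
  ring

theorem Qbar_mul_kronA_transpose (G : Matrix (Fin p) (Fin p) ℝ) (lam : Fin p → ℝ) :
    Qbar G lam * (kronA p)ᵀ = (kronA p)ᵀ * G := by
  ext ⟨i, k⟩ j
  by_cases hij : i = j
  · subst hij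
    fin_cases k <;> simp [mul_apply, Fintype.sum_prod_type, Qbar, kronA, Fin.sum_univ_two]
  · fin_cases k <;> simp [mul_apply, Fintype.sum_prod_type, Qbar, kronA, Fin.sum_univ_two, hij]

theorem Qtil_mul_kronA_transpose (G : Matrix (Fin p) (Fin p) ℝ) (lam : Fin p → ℝ) :
    Qtil G lam * (kronA p)ᵀ = (kronA p)ᵀ * G := by
  ext ⟨i, k⟩ j
  by_cases hij : i = j
  · subst hij
    fin_cases k <;> simp [mul_apply, Fintype.sum_prod_type, Qtil, kronA, Fin.sum_univ_two]
  · fin_cases k <;> simp [mul_apply, Fintype.sum_prod_type, Qtil, kronA, Fin.sum_univ_two, hij]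

theorem Dbar_mulVec_one {G : Matrix (Fin p) (Fin p) ℝ} (hG : ∀ i, ∑ j, G i j = 0)
    (lam : Fin p → ℝ) : Dbar G lam *ᵥ 1 = (kronA p)ᵀ *ᵥ lam := by
  have hG1 : G *ᵥ 1 = 0 := funext fun i => by simpa [mulVec, dotProduct] using hG i
  have hQ1 : Qbar G lam *ᵥ 1 = 0 := by
    rw [← kronA_transpose_mulVec_one, mulVec_mulVec, Qbar_mul_kronA_transpose, ← mulVec_mulVec,
      hG1, mulVec_zero]
  rw [Dbar, sub_mulVec, hQ1, zero_sub, kronA_transpose_mulVec]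
  ext ik
  simp [Qbar, mulVec_diagonal]

theorem Dtil_mulVec_one (lam : Fin p → ℝ) : Dtil lam *ᵥ 1 = (kronA p)ᵀ *ᵥ lam := by
  ext ⟨i, k⟩
  fin_cases k <;> simp [mulVec, dotProduct, Fintype.sum_prod_type, Dtil, kronA, Fin.sum_univ_two]

theorem Qbar_transpose (G : Matrix (Fin p) (Fin p) ℝ) (lam : Fin p → ℝ) :
    (Qbar G lam)ᵀ = Qbar Gᵀ lam := by
  ext ⟨i, k⟩ ⟨j, l⟩
  by_cases hij : i = j
  · subst hij
    simp [Qbar, eq_comm]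
  · simp [Qbar, hij, Ne.symm hij, eq_comm]

theorem kronA_mul_Qbar (G : Matrix (Fin p) (Fin p) ℝ) (lam : Fin p → ℝ) :
    kronA p * Qbar G lam = G * kronA p := by
  rw [← transpose_transpose (Qbar G lam), Qbar_transpose, ← transpose_transpose (kronA p),
    ← transpose_mul, Qbar_mul_kronA_transpose, transpose_mul, transpose_transpose,
    transpose_transpose]

theorem piHat_vecMul_Qbar {G : Matrix (Fin p) (Fin p) ℝ} {θ : Fin p → ℝ} (hθ : θ ᵥ* G = 0)
    (lam : Fin p → ℝ) : piHat θ ᵥ* Qbar G lam = 0 := by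
  rw [piHat, smul_vecMul, vecMul_vecMul, kronA_mul_Qbar, ← vecMul_vecMul, hθ, zero_vecMul,
    smul_zero]

theorem piHat_vecMul_Dbar {G : Matrix (Fin p) (Fin p) ℝ} {θ : Fin p → ℝ} (hθ : θ ᵥ* G = 0)
    (lam : Fin p → ℝ) : piHat θ ᵥ* Dbar G lam = piHat θ ᵥ* Dtil lam := by
  rw [Dbar, vecMul_sub, piHat_vecMul_Qbar hθ, zero_sub]
  ext ⟨j, l⟩
  rw [Pi.neg_apply, vecMul_diagonal]
  fin_cases l <;> simp [Qbar, vecMul, dotProduct, Fintype.sum_prod_type,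
    Dtil, piHat_apply, Fin.sum_univ_two]

end Construction

theorem stmt15_general {p : ℕ} (G : Matrix (Fin p) (Fin p) ℝ) (lam : Fin p → ℝ)
    (hG : IsGenerator G)
    (θ : Fin p → ℝ) (hθ : IsStationaryGen G θ)
    (DsQb DsQt : Matrix (Fin p × Fin 2) (Fin p × Fin 2) ℝ)
    (hDsQb : IsDeviation (Qbar G lam) (piHat θ) DsQb)
    (hDsQt : IsDeviation (Qtil G lam) (piHat θ) DsQt)
    (DtQb DtQt : ℝ → Matrix (Fin p × Fin 2) (Fin p × Fin 2) ℝ)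
    (hDtQb : IsTransientDeviation (Qbar G lam) (piHat θ) DtQb)
    (hDtQt : IsTransientDeviation (Qtil G lam) (piHat θ) DtQt) :
    ∀ t : ℝ, 0 ≤ t →
      ((piHat θ ᵥ* Dtil lam) ⬝ᵥ 1) * t = ((piHat θ ᵥ* Dbar G lam) ⬝ᵥ 1) * t ∧
      ((piHat θ ᵥ* Dbar G lam) ⬝ᵥ 1) * t
          + 2 * ((piHat θ ᵥ* Dbar G lam) ⬝ᵥ (DsQb *ᵥ (Dbar G lam *ᵥ 1))) * t
          - 2 * ((piHat θ ᵥ* Dbar G lam) ⬝ᵥ (DsQb *ᵥ (DtQb t *ᵥ (Dbar G lam *ᵥ 1))))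
        = ((piHat θ ᵥ* Dtil lam) ⬝ᵥ 1) * t
          + 2 * ((piHat θ ᵥ* Dtil lam) ⬝ᵥ (DsQt *ᵥ (Dtil lam *ᵥ 1))) * t
          - 2 * ((piHat θ ᵥ* Dtil lam) ⬝ᵥ (DsQt *ᵥ (DtQt t *ᵥ (Dtil lam *ᵥ 1)))) := by
  intro t _
  let DtG : ℝ → Matrix (Fin p) (Fin p) ℝ :=
    fun t i j => ∫ u in Set.Ioc 0 t, (exp (u • G) i j - (piHat θ ᵥ* (kronA p)ᵀ) j)
  have hDtG : IsTransientDeviation G (piHat θ ᵥ* (kronA p)ᵀ) DtG := fun _ _ _ => rfl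
  have hDs : DsQb * (kronA p)ᵀ = DsQt * (kronA p)ᵀ := hDsQb.mul_eq_mul_of_mul_eq hDsQt
    (Qbar_mul_kronA_transpose G lam) (Qtil_mul_kronA_transpose G lam)
  have hDtb := hDtQb.mul_eq_mul_of_mul_eq hDtG (Qbar_mul_kronA_transpose G lam)
    kronA_transpose_mulVec_one t
  have hDtt := hDtQt.mul_eq_mul_of_mul_eq hDtG (Qtil_mul_kronA_transpose G lam)
    kronA_transpose_mulVec_one t
  rw [piHat_vecMul_Dbar hθ.2.2, Dbar_mulVec_one hG.2, Dtil_mulVec_one]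
  refine ⟨rfl, ?_⟩
  simp only [mulVec_mulVec, hDtb, hDtt]
  rw [← Matrix.mul_assoc DsQb, ← Matrix.mul_assoc DsQt, hDs]

theorem stmt15 {p : ℕ} (G : Matrix (Fin p) (Fin p) ℝ) (lam : Fin p → ℝ)
    (hG : IsGenerator G) (hirr : IsIrreducibleGen G) (hslow : IsSlow G lam)
    (θ : Fin p → ℝ) (hθ : IsStationaryGen G θ)
    (DsG : Matrix (Fin p) (Fin p) ℝ) (hDsG : IsDeviation G θ DsG)
    (DsQb DsQt : Matrix (Fin p × Fin 2) (Fin p × Fin 2) ℝ)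
    (hDsQb : IsDeviation (Qbar G lam) (piHat θ) DsQb)
    (hDsQt : IsDeviation (Qtil G lam) (piHat θ) DsQt)
    (DtQb DtQt : ℝ → Matrix (Fin p × Fin 2) (Fin p × Fin 2) ℝ)
    (hDtQb : IsTransientDeviation (Qbar G lam) (piHat θ) DtQb)
    (hDtQt : IsTransientDeviation (Qtil G lam) (piHat θ) DtQt) :
    ∀ t : ℝ, 0 ≤ t →
      ((piHat θ ᵥ* Dtil lam) ⬝ᵥ 1) * t = ((piHat θ ᵥ* Dbar G lam) ⬝ᵥ 1) * t ∧
      ((piHat θ ᵥ* Dbar G lam) ⬝ᵥ 1) * t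
          + 2 * ((piHat θ ᵥ* Dbar G lam) ⬝ᵥ (DsQb *ᵥ (Dbar G lam *ᵥ 1))) * t
          - 2 * ((piHat θ ᵥ* Dbar G lam) ⬝ᵥ (DsQb *ᵥ (DtQb t *ᵥ (Dbar G lam *ᵥ 1))))
        = ((piHat θ ᵥ* Dtil lam) ⬝ᵥ 1) * t
          + 2 * ((piHat θ ᵥ* Dtil lam) ⬝ᵥ (DsQt *ᵥ (Dtil lam *ᵥ 1))) * t
          - 2 * ((piHat θ ᵥ* Dtil lam) ⬝ᵥ (DsQt *ᵥ (DtQt t *ᵥ (Dtil lam *ᵥ 1)))) :=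
  stmt15_general G lam hG θ hθ DsQb DsQt hDsQb hDsQt DtQb DtQt hDtQb hDtQt
end
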